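/- arXiv:1012.4989 — 2 statements merged into one kernel-verified Lean document; each statement's English description precedes it below -/
import Mathlib

section
/- Let F(t, X, Y, Z) be a polynomial in t with coefficients homogeneous of degree d in X, Y, Z, and suppose that for every t near 0 the curve {F_t = 0} passes through a point p(t) = [a(t), b(t), 1] with multiplicity at least m (all partial derivatives in X, Y, Z of order < m vanish at p(t)). Then the curve {(∂F_t/∂t)|_{t=0} = 0} passes through p(0) with multiplicity at least m − 1. -/
open MvPolynomial

/-- Iterated partial derivative of a polynomial in three variables with respect to the
multi-index `e : Fin 3 → ℕ`. -/
noncomputable def pdMulti (e : Fin 3 → ℕ) (p : MvPolynomial (Fin 3) ℂ) :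
    MvPolynomial (Fin 3) ℂ :=
  (fun q => pderiv 0 q)^[e 0] ((fun q => pderiv 1 q)^[e 1] ((fun q => pderiv 2 q)^[e 2] p))

/- Auxiliary lemmas -/

private lemma iter_pderiv_add (i : Fin 3) (k : ℕ) (p q : MvPolynomial (Fin 3) ℂ) :
    (fun r => pderiv i r)^[k] (p + q)
      = (fun r => pderiv i r)^[k] p + (fun r => pderiv i r)^[k] q := by
  induction k generalizing p q with
  | zero => rfl
  | succ k ih => simp only [Function.iterate_succ_apply, map_add, ih]

private lemma iter_pderiv_zero (i : Fin 3) (k : ℕ) :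
    (fun r => pderiv i r)^[k] (0 : MvPolynomial (Fin 3) ℂ) = 0 := by
  induction k with
  | zero => rfl
  | succ k ih => simp only [Function.iterate_succ_apply, map_zero, ih]

private lemma iter_pderiv_mul_C (i : Fin 3) (k : ℕ) (p : MvPolynomial (Fin 3) ℂ) (s : ℂ) :
    (fun r => pderiv i r)^[k] (p * MvPolynomial.C s)
      = (fun r => pderiv i r)^[k] p * MvPolynomial.C s := by
  induction k generalizing p with
  | zero => rfl
  | succ k ih =>
      simp only [Function.iterate_succ_apply]
      rw [show pderiv i (p * MvPolynomial.C s) = pderiv i p * MvPolynomial.C s by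
        rw [pderiv_mul, pderiv_C]; ring, ih]

lemma pdMulti_add (e : Fin 3 → ℕ) (p q : MvPolynomial (Fin 3) ℂ) :
    pdMulti e (p + q) = pdMulti e p + pdMulti e q := by
  simp only [pdMulti, iter_pderiv_add]

lemma pdMulti_zero (e : Fin 3 → ℕ) : pdMulti e (0 : MvPolynomial (Fin 3) ℂ) = 0 := by
  simp only [pdMulti, iter_pderiv_zero]

lemma pdMulti_mul_C (e : Fin 3 → ℕ) (p : MvPolynomial (Fin 3) ℂ) (s : ℂ) :
    pdMulti e (p * MvPolynomial.C s) = pdMulti e p * MvPolynomial.C s := by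
  simp only [pdMulti, iter_pderiv_mul_C]

private lemma pderiv_pderiv_comm (i j : Fin 3) (p : MvPolynomial (Fin 3) ℂ) :
    pderiv i (pderiv j p) = pderiv j (pderiv i p) := by
  classical
  induction p using MvPolynomial.induction_on' with
  | add p q hp hq => simp [map_add, hp, hq]
  | monomial s a =>
      rcases eq_or_ne i j with rfl | hij
      · rfl
      · simp only [pderiv_monomial]
        have h1 : (s - Finsupp.single j 1 : Fin 3 →₀ ℕ) i = s i := by
          rw [Finsupp.tsub_apply, Finsupp.single_eq_of_ne hij, Nat.sub_zero]
        have h1' : (s - Finsupp.single i 1 : Fin 3 →₀ ℕ) j = s j := by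
          rw [Finsupp.tsub_apply, Finsupp.single_eq_of_ne hij.symm, Nat.sub_zero]
        have h2 : s - Finsupp.single j 1 - Finsupp.single i 1
            = s - Finsupp.single i 1 - Finsupp.single j 1 := by
          ext k; simp only [Finsupp.tsub_apply]; omega
        rw [h1, h1', h2]
        have : (a * ↑(s j)) * ↑(s i) = (a * ↑(s i)) * ↑(s j) := by ring
        rw [this]

private lemma pderiv_iter_comm (i j : Fin 3) (k : ℕ) (p : MvPolynomial (Fin 3) ℂ) :
    pderiv j ((fun r => pderiv i r)^[k] p)
      = (fun r => pderiv i r)^[k] (pderiv j p) := by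
  induction k generalizing p with
  | zero => rfl
  | succ k ih =>
      rw [Function.iterate_succ_apply, Function.iterate_succ_apply, ih,
        pderiv_pderiv_comm j i p]

lemma pdMulti_update0 (e : Fin 3 → ℕ) (p : MvPolynomial (Fin 3) ℂ) :
    pdMulti (Function.update e 0 (e 0 + 1)) p = pderiv 0 (pdMulti e p) := by
  have h0 : Function.update e 0 (e 0 + 1) 0 = e 0 + 1 := by simp
  have h1 : Function.update e 0 (e 0 + 1) 1 = e 1 := by
    simp [Function.update_apply]
  have h2 : Function.update e 0 (e 0 + 1) 2 = e 2 := by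
    simp [Function.update_apply]
  simp only [pdMulti, h0, h1, h2, Function.iterate_succ_apply']

lemma pdMulti_update1 (e : Fin 3 → ℕ) (p : MvPolynomial (Fin 3) ℂ) :
    pdMulti (Function.update e 1 (e 1 + 1)) p = pderiv 1 (pdMulti e p) := by
  have h0 : Function.update e 1 (e 1 + 1) 0 = e 0 := by
    simp [Function.update_apply]
  have h1 : Function.update e 1 (e 1 + 1) 1 = e 1 + 1 := by simp
  have h2 : Function.update e 1 (e 1 + 1) 2 = e 2 := by
    simp [Function.update_apply]
  simp only [pdMulti, h0, h1, h2, Function.iterate_succ_apply', pderiv_iter_comm]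

/-- The evaluation `MvPolynomial (Fin 3) ℂ → ℂ[t]` at `(a, b, 1)`. -/
noncomputable def phiAB (a b : Polynomial ℂ) :
    MvPolynomial (Fin 3) ℂ →ₐ[ℂ] Polynomial ℂ :=
  MvPolynomial.aeval ![a, b, 1]

lemma eval_phiAB (a b : Polynomial ℂ) (t : ℂ) (p : MvPolynomial (Fin 3) ℂ) :
    Polynomial.eval t (phiAB a b p)
      = MvPolynomial.eval ![Polynomial.eval t a, Polynomial.eval t b, 1] p := by
  induction p using MvPolynomial.induction_on with
  | C r => simp [phiAB]
  | add p q hp hq => simp [map_add, hp, hq]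
  | mul_X p i hp =>
      rw [map_mul, Polynomial.eval_mul, hp, map_mul]
      congr 1
      fin_cases i <;> simp [phiAB]

/-- Chain rule for `phiAB`. -/
lemma derivative_phiAB (a b : Polynomial ℂ) (q : MvPolynomial (Fin 3) ℂ) :
    Polynomial.derivative (phiAB a b q)
      = Polynomial.derivative a * phiAB a b (pderiv 0 q)
        + Polynomial.derivative b * phiAB a b (pderiv 1 q) := by
  induction q using MvPolynomial.induction_on with
  | C r => simp [phiAB, pderiv_C]
  | add p q hp hq => simp only [map_add, hp, hq]; ring
  | mul_X p i hp =>
      rw [map_mul, Polynomial.derivative_mul, hp]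
      fin_cases i <;>
        simp [phiAB, pderiv_mul, map_add, map_mul, Matrix.cons_val_zero,
          Matrix.cons_val_one] <;> ring

/-- The polynomial in `t` whose value at `t` is
`pdMulti e (P(t))` evaluated at `(a(t), b(t), 1)`. -/
noncomputable def TT (a b : Polynomial ℂ) (e : Fin 3 → ℕ)
    (P : Polynomial (MvPolynomial (Fin 3) ℂ)) : Polynomial ℂ :=
  P.sum (fun n c => phiAB a b (pdMulti e c) * Polynomial.X ^ n)

lemma TT_monomial (a b : Polynomial ℂ) (e : Fin 3 → ℕ) (n : ℕ)
    (c : MvPolynomial (Fin 3) ℂ) :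
    TT a b e (Polynomial.monomial n c) = phiAB a b (pdMulti e c) * Polynomial.X ^ n := by
  rw [TT, Polynomial.sum_monomial_index]
  rw [pdMulti_zero, map_zero, zero_mul]

lemma TT_add (a b : Polynomial ℂ) (e : Fin 3 → ℕ)
    (P Q : Polynomial (MvPolynomial (Fin 3) ℂ)) :
    TT a b e (P + Q) = TT a b e P + TT a b e Q := by
  rw [TT, TT, TT, Polynomial.sum_add_index]
  · intro n; rw [pdMulti_zero, map_zero, zero_mul]
  · intro n c₁ c₂; rw [pdMulti_add, map_add, add_mul]

lemma eval_TT (a b : Polynomial ℂ) (e : Fin 3 → ℕ) (t : ℂ)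
    (P : Polynomial (MvPolynomial (Fin 3) ℂ)) :
    Polynomial.eval t (TT a b e P)
      = MvPolynomial.eval ![Polynomial.eval t a, Polynomial.eval t b, 1]
          (pdMulti e (Polynomial.eval (MvPolynomial.C t) P)) := by
  induction P using Polynomial.induction_on' with
  | add P Q hP hQ =>
      rw [TT_add, Polynomial.eval_add, hP, hQ, Polynomial.eval_add, pdMulti_add, map_add]
  | monomial n c =>
      rw [TT_monomial, Polynomial.eval_mul, Polynomial.eval_pow, Polynomial.eval_X,
        eval_phiAB, Polynomial.eval_monomial, ← MvPolynomial.C_pow, pdMulti_mul_C,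
        map_mul, MvPolynomial.eval_C]

/-- Chain rule for `TT`. -/
lemma derivative_TT (a b : Polynomial ℂ) (e : Fin 3 → ℕ)
    (P : Polynomial (MvPolynomial (Fin 3) ℂ)) :
    Polynomial.derivative (TT a b e P)
      = TT a b e (Polynomial.derivative P)
        + Polynomial.derivative a * TT a b (Function.update e 0 (e 0 + 1)) P
        + Polynomial.derivative b * TT a b (Function.update e 1 (e 1 + 1)) P := by
  induction P using Polynomial.induction_on' with
  | add P Q hP hQ =>
      simp only [TT_add, map_add, hP, hQ]; ring
  | monomial n c =>
      rw [TT_monomial, Polynomial.derivative_mul, derivative_phiAB,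
        Polynomial.derivative_monomial, TT_monomial, TT_monomial, TT_monomial,
        pdMulti_update0, pdMulti_update1]
      have hc : pdMulti e (c * (n : MvPolynomial (Fin 3) ℂ))
          = pdMulti e c * MvPolynomial.C (n : ℂ) := by
        rw [show ((n : MvPolynomial (Fin 3) ℂ)) = MvPolynomial.C ((n : ℂ)) by
          simp, pdMulti_mul_C]
      rw [hc, map_mul]
      have : phiAB a b (MvPolynomial.C ((n : ℂ))) = Polynomial.C ((n : ℂ)) := by
        simp [phiAB]
      rw [this, Polynomial.derivative_X_pow]
      ring

/-- Xu's deformation lemma: if `F(t, X, Y, Z)` is a polynomial in `t` with coefficients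
homogeneous of degree `d` in `X, Y, Z`, and for all `t` near `0` the curve `{F_t = 0}`
passes through `p(t) = [a(t), b(t), 1]` with multiplicity at least `m` (all partials in
`X, Y, Z` of order `< m` vanish at `p(t)`), then the curve `{(∂F/∂t)|_{t=0} = 0}` passes
through `p(0)` with multiplicity at least `m - 1`. -/
theorem stmt11 (d m : ℕ) (hm : 1 ≤ m)
    (F : Polynomial (MvPolynomial (Fin 3) ℂ))
    (hhom : ∀ n : ℕ, (F.coeff n).IsHomogeneous d)
    (a b : Polynomial ℂ)
    (hmult : ∀ᶠ t in nhds (0 : ℂ), ∀ e : Fin 3 → ℕ, e 0 + e 1 + e 2 < m →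
      MvPolynomial.eval ![a.eval t, b.eval t, 1]
        (pdMulti e (Polynomial.eval (MvPolynomial.C t) F)) = 0) :
    ∀ e : Fin 3 → ℕ, e 0 + e 1 + e 2 < m - 1 →
      MvPolynomial.eval ![a.eval 0, b.eval 0, 1]
        (pdMulti e (Polynomial.eval (MvPolynomial.C 0) (Polynomial.derivative F))) = 0 := by
  -- For every multi-index of order < m, `TT a b e F` is the zero polynomial
  have hvanish : ∀ e : Fin 3 → ℕ, e 0 + e 1 + e 2 < m → TT a b e F = 0 := by
    intro e he
    obtain ⟨s, hs_mem, hs⟩ := Filter.eventually_iff_exists_mem.mp hmult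
    apply Polynomial.eq_zero_of_infinite_isRoot
    have hinf := infinite_of_mem_nhds (0 : ℂ) hs_mem
    refine hinf.mono ?_
    intro t ht
    show Polynomial.eval t (TT a b e F) = 0
    rw [eval_TT]
    exact hs t ht e he
  intro e he
  set e0 := Function.update e 0 (e 0 + 1) with he0
  set e1 := Function.update e 1 (e 1 + 1) with he1
  have hsum0 : e0 0 + e0 1 + e0 2 = e 0 + e 1 + e 2 + 1 := by
    have h0 : e0 0 = e 0 + 1 := by rw [he0, Function.update_self]
    have h1 : e0 1 = e 1 := by rw [he0, Function.update_of_ne (by decide)]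
    have h2 : e0 2 = e 2 := by rw [he0, Function.update_of_ne (by decide)]
    omega
  have hsum1 : e1 0 + e1 1 + e1 2 = e 0 + e 1 + e 2 + 1 := by
    have h0 : e1 0 = e 0 := by rw [he1, Function.update_of_ne (by decide)]
    have h1 : e1 1 = e 1 + 1 := by rw [he1, Function.update_self]
    have h2 : e1 2 = e 2 := by rw [he1, Function.update_of_ne (by decide)]
    omega
  have hTTd : TT a b e (Polynomial.derivative F) = 0 := by
    have h := derivative_TT a b e F
    rw [hvanish e (by omega), hvanish e0 (by omega), hvanish e1 (by omega)] at h
    simpa using h.symm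
  have := eval_TT a b e 0 (Polynomial.derivative F)
  rw [hTTd] at this
  simpa using this.symm
end

section
/- Let f be a homogeneous polynomial of degree m in two variables over ℂ and write f = f_m for the initial form of a curve germ at the origin. If in local coordinates Γ = {f_m(x,y) + (higher order terms) = 0}, and Γ' = {g_{m−1}(x,y) + (higher order terms) = 0} where g_{m−1} = ȧ·∂f_m/∂x + ḃ·∂f_m/∂y ≠ 0, then the local intersection multiplicity of Γ and Γ' at the origin is at least m(m−1) + (number of common tangent directions of f_m and g_{m−1} counted with multiplicity). -/
open MvPolynomial

namespace S12

/-- total degree of an exponent in two variables -/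
def dE (e : Fin 2 →₀ ℕ) : ℕ := e 0 + e 1

lemma dE_add (e₁ e₂ : Fin 2 →₀ ℕ) : dE (e₁ + e₂) = dE e₁ + dE e₂ := by
  simp [dE, Finsupp.add_apply]; ring

lemma dE_sum (e : Fin 2 →₀ ℕ) : (e.sum fun _ n => n) = dE e := by
  rw [Finsupp.sum]
  rw [show ∑ i ∈ e.support, e i = ∑ i : Fin 2, e i from
    Finset.sum_subset (Finset.subset_univ _)
      (fun i _ hi => Finsupp.notMem_support_iff.mp hi)]
  simp [dE, Fin.sum_univ_two]

lemma dE_degree (e : Fin 2 →₀ ℕ) : e.degree = dE e := by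
  rw [Finsupp.degree, ← dE_sum, Finsupp.sum]; rfl

lemma dE_support (e : Fin 2 →₀ ℕ) : ∑ i ∈ e.support, e i = dE e := by
  rw [← dE_degree]; rfl

/-- index type for monomials of total degree `< n` -/
def Idx (n : ℕ) : Type := Σ a : Fin n, Fin (n - a.val)

instance (n : ℕ) : Fintype (Idx n) := by unfold Idx; infer_instance
instance (n : ℕ) : DecidableEq (Idx n) := by unfold Idx; exact Sigma.instDecidableEqSigma

/-- the exponent corresponding to an index -/
noncomputable def emb {n : ℕ} (p : Idx n) : Fin 2 →₀ ℕ :=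
  Finsupp.single 0 p.1.val + Finsupp.single 1 p.2.val

lemma emb_apply0 {n : ℕ} (p : Idx n) : emb p 0 = p.1.val := by
  simp [emb, Finsupp.single_apply]

lemma emb_apply1 {n : ℕ} (p : Idx n) : emb p 1 = p.2.val := by
  simp [emb, Finsupp.single_apply]

lemma dE_emb {n : ℕ} (p : Idx n) : dE (emb p) < n := by
  have h1 := p.1.isLt
  have h2 := p.2.isLt
  simp only [dE, emb_apply0, emb_apply1]
  omega

lemma emb_inj {n : ℕ} : Function.Injective (emb (n := n)) := by
  rintro ⟨⟨a, ha⟩, ⟨b, hb⟩⟩ ⟨⟨a', ha'⟩, ⟨b', hb'⟩⟩ hpq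
  have h0 : a = a' := by
    have := congrArg (fun e => e 0) hpq
    simpa [emb, Finsupp.single_apply] using this
  subst h0
  have h1 : b = b' := by
    have := congrArg (fun e => e 1) hpq
    simpa [emb, Finsupp.single_apply] using this
  subst h1
  rfl

lemma emb_surj {n : ℕ} (e : Fin 2 →₀ ℕ) (he : dE e < n) : ∃ p : Idx n, emb p = e := by
  have h0 : e 0 < n := by simp only [dE] at he; omega
  have h1 : e 1 < n - e 0 := by simp only [dE] at he; omega
  refine ⟨⟨⟨e 0, h0⟩, ⟨e 1, h1⟩⟩, ?_⟩
  ext i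
  fin_cases i
  · simp [emb, Finsupp.single_apply]
  · simp [emb, Finsupp.single_apply]

lemma card_Idx (n : ℕ) : 2 * Fintype.card (Idx n) = n * (n + 1) := by
  have : Fintype.card (Idx n) = ∑ a : Fin n, (n - a.val) := by
    show Fintype.card (Σ a : Fin n, Fin (n - a.val)) = _
    rw [Fintype.card_sigma]
    simp
  rw [this, Fin.sum_univ_eq_sum_range (fun i => n - i) n]
  have hrefl := Finset.sum_range_reflect (fun i => n - i) n
  have : ∑ j ∈ Finset.range n, (n - (n - 1 - j)) = ∑ j ∈ Finset.range n, (j + 1) := by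
    apply Finset.sum_congr rfl
    intro j hj
    have := Finset.mem_range.mp hj
    omega
  rw [← hrefl, this, Finset.sum_add_distrib]
  have := Finset.sum_range_id_mul_two n
  simp only [Finset.sum_const, Finset.card_range, smul_eq_mul, mul_one]
  cases n with
  | zero => simp
  | succ s =>
    have hs := Finset.sum_range_id_mul_two (s + 1)
    simp only [Nat.add_sub_cancel] at hs
    nlinarith [hs]


noncomputable abbrev PS := MvPowerSeries (Fin 2) ℂ
noncomputable abbrev MP := MvPolynomial (Fin 2) ℂ

/-- from coefficient data to a power series (sum of monomials) -/
noncomputable def ofFun (n : ℕ) : (Idx n → ℂ) →ₗ[ℂ] PS :=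
  ∑ p : Idx n, (MvPowerSeries.monomial (emb p)).comp (LinearMap.proj p)

lemma ofFun_apply (n : ℕ) (w : Idx n → ℂ) :
    ofFun n w = ∑ p : Idx n, MvPowerSeries.monomial (emb p) (w p) := by
  simp [ofFun, LinearMap.sum_apply]

lemma coeff_ofFun_emb (n : ℕ) (w : Idx n → ℂ) (p : Idx n) :
    MvPowerSeries.coeff (emb p) (ofFun n w) = w p := by
  rw [ofFun_apply, map_sum]
  rw [Finset.sum_eq_single p]
  · rw [MvPowerSeries.coeff_monomial_same]
  · intro q _ hq
    exact MvPowerSeries.coeff_monomial_ne (fun hh => hq (emb_inj hh).symm) _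
  · intro hp; exact absurd (Finset.mem_univ p) hp

lemma coeff_ofFun_far (n : ℕ) (w : Idx n → ℂ) (e : Fin 2 →₀ ℕ) (he : ¬ dE e < n) :
    MvPowerSeries.coeff e (ofFun n w) = 0 := by
  rw [ofFun_apply, map_sum]
  apply Finset.sum_eq_zero
  intro q _
  refine MvPowerSeries.coeff_monomial_ne (fun hh => he ?_) _
  subst hh
  exact dE_emb q

/-- truncation of a power series to coefficient data -/
noncomputable def truncPS (n : ℕ) : PS →ₗ[ℂ] (Idx n → ℂ) :=
  LinearMap.pi (fun p => MvPowerSeries.coeff (emb p))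

lemma truncPS_apply (n : ℕ) (P : PS) (p : Idx n) :
    truncPS n P p = MvPowerSeries.coeff (emb p) P := rfl

/-- the coercion from polynomials to power series, as a linear map -/
noncomputable def cps : MP →ₗ[ℂ] PS :=
  (MvPolynomial.coeToMvPowerSeries.algHom ℂ).toLinearMap

lemma cps_apply (q : MP) : cps q = (q : PS) := by
  simp [cps, MvPolynomial.coeToMvPowerSeries.algHom_apply]

/-- roundtrip: truncation then `ofFun` recovers low-degree polynomials -/
lemma ofFun_trunc (n : ℕ) (q : MP) (hq : q.totalDegree < n) :
    ofFun n (truncPS n (q : PS)) = (q : PS) := by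
  ext e
  by_cases he : dE e < n
  · obtain ⟨p, rfl⟩ := emb_surj e he
    rw [coeff_ofFun_emb, truncPS_apply]
  · rw [coeff_ofFun_far n _ e he, MvPolynomial.coeff_coe]
    exact (MvPolynomial.coeff_eq_zero_of_totalDegree_lt (by rw [dE_support]; omega)).symm

/-- coefficients of `ofFun ∘ truncPS` agree with the original in low degrees -/
lemma coeff_ofFun_trunc (n : ℕ) (P : PS) (e : Fin 2 →₀ ℕ) (he : dE e < n) :
    MvPowerSeries.coeff e (ofFun n (truncPS n P)) = MvPowerSeries.coeff e P := by
  obtain ⟨p, rfl⟩ := emb_surj e he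
  rw [coeff_ofFun_emb, truncPS_apply]


lemma dE_of_coeff_ne {p : MP} {n : ℕ} (hp : p.IsHomogeneous n) {e : Fin 2 →₀ ℕ}
    (hc : MvPolynomial.coeff e p ≠ 0) : dE e = n := by
  by_contra hne
  exact hc (hp.coeff_eq_zero (by rwa [dE_degree]))

lemma coeff_homog_ne {p : MP} {n : ℕ} (hp : p.IsHomogeneous n) {e : Fin 2 →₀ ℕ}
    (hne : dE e ≠ n) : MvPolynomial.coeff e p = 0 :=
  hp.coeff_eq_zero (by rwa [dE_degree])

lemma pderiv_isHomogeneous {p : MP} {n : ℕ} (hp : p.IsHomogeneous n) (i : Fin 2) :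
    (pderiv i p).IsHomogeneous (n - 1) := by
  rw [← MvPolynomial.support_sum_monomial_coeff p, map_sum]
  apply MvPolynomial.IsHomogeneous.sum
  intro s hs
  rw [MvPolynomial.pderiv_monomial]
  by_cases hsi : s i = 0
  · rw [hsi]
    simp only [Nat.cast_zero, mul_zero, map_zero]
    exact MvPolynomial.isHomogeneous_zero _ _ _
  · apply MvPolynomial.isHomogeneous_monomial
    have hds : dE s = n := dE_of_coeff_ne hp (MvPolynomial.mem_support_iff.mp hs)
    rw [dE_degree]
    simp only [dE] at hds ⊢
    rw [Finsupp.tsub_apply, Finsupp.tsub_apply]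
    fin_cases i <;> simp_all [Finsupp.single_apply] <;> omega

/-- a factor of a nonzero homogeneous polynomial by a homogeneous polynomial is homogeneous -/
lemma homog_factor {p h q : MP} {n k : ℕ} (hp : p.IsHomogeneous n) (hh : h.IsHomogeneous k)
    (heq : p = h * q) (hh0 : h ≠ 0) (hq0 : q ≠ 0) :
    k ≤ n ∧ q.IsHomogeneous (n - k) := by
  have comp_zero : ∀ j : ℕ, k + j ≠ n → homogeneousComponent j q = 0 := by
    intro j hj
    have key : h * homogeneousComponent j q = homogeneousComponent (k + j) p := by
      conv_rhs => rw [heq]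
      conv_rhs => rw [← MvPolynomial.sum_homogeneousComponent q]
      rw [Finset.mul_sum, map_sum]
      by_cases hjr : j ∈ Finset.range (q.totalDegree + 1)
      · rw [Finset.sum_eq_single j]
        · rw [MvPolynomial.homogeneousComponent_of_mem
            ((MvPolynomial.mem_homogeneousSubmodule _ _).mpr
              (hh.mul (MvPolynomial.homogeneousComponent_isHomogeneous j q))), if_pos rfl]
        · intro i _ hij
          rw [MvPolynomial.homogeneousComponent_of_mem
            ((MvPolynomial.mem_homogeneousSubmodule _ _).mpr
              (hh.mul (MvPolynomial.homogeneousComponent_isHomogeneous i q))), if_neg (by omega)]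
        · intro hjr'; exact absurd hjr hjr'
      · have : homogeneousComponent j q = 0 :=
          MvPolynomial.homogeneousComponent_eq_zero _ q (by
            simp only [Finset.mem_range] at hjr; omega)
        rw [this, mul_zero]
        symm
        apply Finset.sum_eq_zero
        intro i hi
        rw [MvPolynomial.homogeneousComponent_of_mem
          ((MvPolynomial.mem_homogeneousSubmodule _ _).mpr
            (hh.mul (MvPolynomial.homogeneousComponent_isHomogeneous i q))), if_neg]
        intro hcontra
        simp only [Finset.mem_range] at hi hjr
        omega
    have hzero : homogeneousComponent (k + j) p = 0 := by
      rcases eq_or_ne p 0 with rfl | hp0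
      · simp
      · rw [MvPolynomial.homogeneousComponent_of_mem
          ((MvPolynomial.mem_homogeneousSubmodule _ _).mpr hp), if_neg (by omega)]
    rw [hzero] at key
    rcases mul_eq_zero.mp key with hc | hc
    · exact absurd hc hh0
    · exact hc
  have hkn : k ≤ n := by
    by_contra hkn
    apply hq0
    rw [← MvPolynomial.sum_homogeneousComponent q]
    apply Finset.sum_eq_zero
    intro i _
    exact comp_zero i (by omega)
  refine ⟨hkn, ?_⟩
  have : q = homogeneousComponent (n - k) q := by
    conv_lhs => rw [← MvPolynomial.sum_homogeneousComponent q]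
    apply Finset.sum_eq_single (n - k)
    · intro i _ hi; exact comp_zero i (by omega)
    · intro hnot
      exfalso
      simp only [Finset.mem_range] at hnot
      exact hq0 (by
        rw [← MvPolynomial.sum_homogeneousComponent q]
        apply Finset.sum_eq_zero
        intro i hi
        simp only [Finset.mem_range] at hi
        exact comp_zero i (by omega))
  rw [this]
  exact MvPolynomial.homogeneousComponent_isHomogeneous _ _

/-- product of two power series with vanishing low-order terms -/
lemma coeff_mul_low (P Q : PS) (a b : ℕ)
    (hP : ∀ e, dE e < a → MvPowerSeries.coeff e P = 0)
    (hQ : ∀ e, dE e < b → MvPowerSeries.coeff e Q = 0)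
    (e : Fin 2 →₀ ℕ) (he : dE e < a + b) : MvPowerSeries.coeff e (P * Q) = 0 := by
  rw [MvPowerSeries.coeff_mul]
  apply Finset.sum_eq_zero
  intro pq hpq
  have hsum : pq.1 + pq.2 = e := Finset.HasAntidiagonal.mem_antidiagonal.mp hpq
  have hd : dE pq.1 + dE pq.2 = dE e := by rw [← dE_add, hsum]
  rcases lt_or_ge (dE pq.1) a with hlt | hge
  · rw [hP _ hlt, zero_mul]
  · rw [hQ _ (by omega), mul_zero]

end S12

open S12

set_option maxHeartbeats 1000000 in
/-- Local intersection bound: if the curve germs `Γ = {F = 0}` and `Γ' = {G = 0}` at the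
origin have initial forms `f_m` (of degree `m`) and `g_{m-1} = ȧ·∂f_m/∂x + ḃ·∂f_m/∂y ≠ 0`
(of degree `m-1`) respectively, and `f_m`, `g_{m-1}` have a common homogeneous factor `h`
of degree `k` (i.e. `k` common tangent directions counted with multiplicity), then the
local intersection multiplicity `dim_ℂ 𝒪/(F, G)` is at least `m(m-1) + k`. -/
theorem stmt12 (m k : ℕ) (hm : 1 ≤ m)
    (F G : MvPowerSeries (Fin 2) ℂ)
    (f : MvPolynomial (Fin 2) ℂ) (hf : f.IsHomogeneous m) (hf0 : f ≠ 0)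
    (hFlow : ∀ e : Fin 2 →₀ ℕ, (e.sum fun _ n => n) < m → MvPowerSeries.coeff e F = 0)
    (hFin : ∀ e : Fin 2 →₀ ℕ, (e.sum fun _ n => n) = m →
      MvPowerSeries.coeff e F = MvPolynomial.coeff e f)
    (adot bdot : ℂ)
    (g : MvPolynomial (Fin 2) ℂ)
    (hg : g = C adot * pderiv 0 f + C bdot * pderiv 1 f) (hg0 : g ≠ 0)
    (hGlow : ∀ e : Fin 2 →₀ ℕ, (e.sum fun _ n => n) < m - 1 → MvPowerSeries.coeff e G = 0)
    (hGin : ∀ e : Fin 2 →₀ ℕ, (e.sum fun _ n => n) = m - 1 →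
      MvPowerSeries.coeff e G = MvPolynomial.coeff e g)
    (h : MvPolynomial (Fin 2) ℂ) (hh : h.IsHomogeneous k) (hh0 : h ≠ 0)
    (hhf : h ∣ f) (hhg : h ∣ g) :
    ((m * (m - 1) + k : ℕ) : Cardinal) ≤
      Module.rank ℂ (MvPowerSeries (Fin 2) ℂ ⧸ Ideal.span {F, G}) := by
  classical
  obtain ⟨s, rfl⟩ : ∃ s, m = s + 1 := ⟨m - 1, by omega⟩
  clear hm
  -- convert low-order hypotheses to `dE` form
  replace hFlow : ∀ e, dE e < s + 1 → MvPowerSeries.coeff e F = 0 := fun e he =>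
    hFlow e (by rwa [dE_sum])
  replace hFin : ∀ e, dE e = s + 1 →
      MvPowerSeries.coeff e F = MvPolynomial.coeff e f := fun e he =>
    hFin e (by rwa [dE_sum])
  replace hGlow : ∀ e, dE e < s → MvPowerSeries.coeff e G = 0 := fun e he =>
    hGlow e (by rw [dE_sum]; simpa using he)
  replace hGin : ∀ e, dE e = s →
      MvPowerSeries.coeff e G = MvPolynomial.coeff e g := fun e he =>
    hGin e (by rw [dE_sum]; simpa using he)
  -- `g` is homogeneous of degree `s`
  have hgHom : g.IsHomogeneous s := by
    rw [hg]
    have h1 := (pderiv_isHomogeneous hf 0).C_mul adot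
    have h2 := (pderiv_isHomogeneous hf 1).C_mul bdot
    simpa using h1.add h2
  -- factorizations
  obtain ⟨f₁, hff⟩ := hhf
  obtain ⟨g₁, hgg⟩ := hhg
  have hf₁0 : f₁ ≠ 0 := fun h0 => hf0 (by rw [hff, h0, mul_zero])
  have hg₁0 : g₁ ≠ 0 := fun h0 => hg0 (by rw [hgg, h0, mul_zero])
  obtain ⟨hks, hg₁⟩ := homog_factor hgHom hh hgg hh0 hg₁0
  obtain ⟨hks', hf₁⟩ := homog_factor hf hh hff hh0 hf₁0
  rw [show s + 1 - k = s + 1 - k from rfl] at hf₁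
  -- main objects
  set I : Ideal PS := Ideal.span {F, G} with hI
  set π : PS →ₗ[ℂ] (Idx (2*s+1) → ℂ) := truncPS (2*s+1) with hπ
  set U : Submodule ℂ (Idx (2*s+1) → ℂ) := Submodule.map π (I.restrictScalars ℂ) with hU
  set θ : ((Idx s → ℂ) × (Idx (s+1) → ℂ)) →ₗ[ℂ] (Idx (2*s+1) → ℂ) :=
    π ∘ₗ ((LinearMap.mulLeft ℂ F) ∘ₗ (ofFun s) ∘ₗ (LinearMap.fst ℂ _ _)
        + (LinearMap.mulLeft ℂ G) ∘ₗ (ofFun (s+1)) ∘ₗ (LinearMap.snd ℂ _ _)) with hθ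
  have hθ_apply : ∀ x : (Idx s → ℂ) × (Idx (s+1) → ℂ),
      θ x = π (F * ofFun s x.1 + G * ofFun (s+1) x.2) := by
    intro x
    simp [hθ, LinearMap.mulLeft_apply]
  -- U is contained in the range of θ
  have hUrange : U ≤ LinearMap.range θ := by
    rintro w ⟨P, hP, rfl⟩
    obtain ⟨A, B, hAB⟩ := Ideal.mem_span_pair.mp hP
    refine ⟨(truncPS s A, truncPS (s+1) B), ?_⟩
    rw [hθ_apply, ← hAB]
    funext p
    have hdp : dE (emb p) < 2*s+1 := dE_emb p
    simp only [hπ, truncPS_apply]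
    rw [map_add, map_add]
    congr 1
    · have hz : MvPowerSeries.coeff (emb p)
          ((ofFun s (truncPS s A) - A) * F) = 0 := by
        apply coeff_mul_low _ _ s (s+1)
        · intro e he
          rw [map_sub, coeff_ofFun_trunc s A e he, sub_self]
        · exact hFlow
        · omega
      have hexp : F * ofFun s (truncPS s A)
          = (ofFun s (truncPS s A) - A) * F + A * F := by ring
      rw [hexp, map_add, hz, zero_add]
    · have hz : MvPowerSeries.coeff (emb p)
          ((ofFun (s+1) (truncPS (s+1) B) - B) * G) = 0 := by
        apply coeff_mul_low _ _ (s+1) s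
        · intro e he
          rw [map_sub, coeff_ofFun_trunc (s+1) B e he, sub_self]
        · exact hGlow
        · omega
      have hexp : G * ofFun (s+1) (truncPS (s+1) B)
          = (ofFun (s+1) (truncPS (s+1) B) - B) * G + B * G := by ring
      rw [hexp, map_add, hz, zero_add]
  -- the syzygy gives a k-dimensional subspace of the kernel of θ
  have hΨ : ∀ e, dE e ≤ 2*s+1-k →
      MvPowerSeries.coeff e (((g₁ : MP) : PS) * F - ((f₁ : MP) : PS) * G) = 0 := by
    intro e he
    rw [map_sub]
    have e1 : MvPowerSeries.coeff e (((g₁ : MP) : PS) * F)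
        = MvPowerSeries.coeff e (((g₁ * f : MP) : PS)) := by
      rw [MvPolynomial.coe_mul, MvPowerSeries.coeff_mul, MvPowerSeries.coeff_mul]
      apply Finset.sum_congr rfl
      rintro pq hpq
      have hsum : pq.1 + pq.2 = e := Finset.HasAntidiagonal.mem_antidiagonal.mp hpq
      have hd : dE pq.1 + dE pq.2 = dE e := by rw [← dE_add, hsum]
      simp only [MvPolynomial.coeff_coe]
      by_cases hc1 : MvPolynomial.coeff pq.1 g₁ = 0
      · rw [hc1, zero_mul, zero_mul]
      · have hd1 : dE pq.1 = s - k := dE_of_coeff_ne hg₁ hc1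
        by_cases hd2 : dE pq.2 = s + 1
        · rw [hFin pq.2 hd2]
        · simp [hFlow pq.2 (by omega), coeff_homog_ne hf hd2]
    have e2 : MvPowerSeries.coeff e (((f₁ : MP) : PS) * G)
        = MvPowerSeries.coeff e (((f₁ * g : MP) : PS)) := by
      rw [MvPolynomial.coe_mul, MvPowerSeries.coeff_mul, MvPowerSeries.coeff_mul]
      apply Finset.sum_congr rfl
      rintro pq hpq
      have hsum : pq.1 + pq.2 = e := Finset.HasAntidiagonal.mem_antidiagonal.mp hpq
      have hd : dE pq.1 + dE pq.2 = dE e := by rw [← dE_add, hsum]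
      simp only [MvPolynomial.coeff_coe]
      by_cases hc1 : MvPolynomial.coeff pq.1 f₁ = 0
      · rw [hc1, zero_mul, zero_mul]
      · have hd1 : dE pq.1 = s + 1 - k := dE_of_coeff_ne hf₁ hc1
        by_cases hd2 : dE pq.2 = s
        · rw [hGin pq.2 hd2]
        · simp [hGlow pq.2 (by omega), coeff_homog_ne hgHom hd2]
    rw [e1, e2, sub_eq_zero]
    have : g₁ * f = f₁ * g := by rw [hff, hgg]; ring
    rw [this]
  have hker : k ≤ Module.finrank ℂ (LinearMap.ker θ) := by
    rcases Nat.eq_zero_or_pos k with rfl | hk1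
    · exact Nat.zero_le _
    have hs1 : 1 ≤ s := le_trans hk1 hks
    -- basis monomial exponents of degree k-1
    set expC : Fin k → (Fin 2 →₀ ℕ) := fun i =>
      Finsupp.single 0 i.val + Finsupp.single 1 (k - 1 - i.val) with hexpC
    have hexp0 : ∀ i, expC i 0 = i.val := by
      intro i; simp [hexpC, Finsupp.single_apply]
    have hexp1 : ∀ i, expC i 1 = k - 1 - i.val := by
      intro i; simp [hexpC, Finsupp.single_apply]
    have hdexp : ∀ i, dE (expC i) = k - 1 := by
      intro i
      have := i.isLt
      simp only [dE, hexp0, hexp1]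
      omega
    set Cpoly : (Fin k → ℂ) →ₗ[ℂ] MP :=
      ∑ i : Fin k, (MvPolynomial.monomial (expC i)).comp (LinearMap.proj i) with hCpoly
    have hCpoly_apply : ∀ c, Cpoly c = ∑ i : Fin k, MvPolynomial.monomial (expC i) (c i) := by
      intro c; simp [hCpoly]
    have hCcoeff : ∀ (c) (e), MvPolynomial.coeff e (Cpoly c) ≠ 0 → dE e = k - 1 := by
      intro c e hne
      rw [hCpoly_apply] at hne
      simp only [MvPolynomial.coeff_sum, MvPolynomial.coeff_monomial] at hne
      obtain ⟨i, _, hi⟩ := Finset.exists_ne_zero_of_sum_ne_zero hne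
      by_cases hee : expC i = e
      · rw [← hee]; exact hdexp i
      · rw [if_neg hee] at hi; exact absurd rfl hi
    have hCdeg : ∀ c, (Cpoly c).totalDegree ≤ k - 1 := by
      intro c
      rw [hCpoly_apply]
      refine le_trans (MvPolynomial.totalDegree_finset_sum _ _) (Finset.sup_le ?_)
      intro i _
      refine le_trans (MvPolynomial.totalDegree_monomial_le _ _) (le_of_eq ?_)
      show (expC i).sum (fun _ n => n) = k - 1
      rw [dE_sum, hdexp]
    have hCcoeff_exp : ∀ c i, MvPolynomial.coeff (expC i) (Cpoly c) = c i := by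
      intro c i
      rw [hCpoly_apply]
      simp only [MvPolynomial.coeff_sum, MvPolynomial.coeff_monomial]
      rw [Finset.sum_eq_single i]
      · rw [if_pos rfl]
      · intro j _ hji
        rw [if_neg]
        intro hje
        apply hji
        have := congrArg (fun e => e 0) hje
        simp only [hexp0] at this
        exact Fin.ext this
      · intro hi; exact absurd (Finset.mem_univ i) hi
    -- the map κ into the kernel
    set κ : (Fin k → ℂ) →ₗ[ℂ] ((Idx s → ℂ) × (Idx (s+1) → ℂ)) :=
      LinearMap.prod
        ((truncPS s) ∘ₗ cps ∘ₗ (LinearMap.mulRight ℂ (g₁ : MP)) ∘ₗ Cpoly)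
        (-((truncPS (s+1)) ∘ₗ cps ∘ₗ (LinearMap.mulRight ℂ (f₁ : MP)) ∘ₗ Cpoly)) with hκ
    have hκ_apply : ∀ c, κ c =
        (truncPS s ((Cpoly c * g₁ : MP) : PS), -(truncPS (s+1) ((Cpoly c * f₁ : MP) : PS))) := by
      intro c
      simp [hκ, LinearMap.mulRight_apply, cps_apply]
    have hdeg_cg : ∀ c, (Cpoly c * g₁ : MP).totalDegree < s := by
      intro c
      refine lt_of_le_of_lt (MvPolynomial.totalDegree_mul _ _) ?_
      have h1 := hCdeg c
      have h2 := hg₁.totalDegree_le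
      omega
    have hdeg_cf : ∀ c, (Cpoly c * f₁ : MP).totalDegree < s + 1 := by
      intro c
      refine lt_of_le_of_lt (MvPolynomial.totalDegree_mul _ _) ?_
      have h1 := hCdeg c
      have h2 := hf₁.totalDegree_le
      omega
    have hκker : ∀ c, θ (κ c) = 0 := by
      intro c
      rw [hκ_apply, hθ_apply]
      simp only [map_neg]
      rw [ofFun_trunc s _ (hdeg_cg c), ofFun_trunc (s+1) _ (hdeg_cf c)]
      have hring : F * ((Cpoly c * g₁ : MP) : PS) + G * -(((Cpoly c * f₁ : MP) : PS))
          = ((Cpoly c : MP) : PS) *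
            ((((g₁ : MP) : PS)) * F - (((f₁ : MP) : PS)) * G) := by
        rw [MvPolynomial.coe_mul, MvPolynomial.coe_mul]
        ring
      rw [hring]
      funext p
      have hdp : dE (emb p) < 2*s+1 := dE_emb p
      simp only [hπ, truncPS_apply, Pi.zero_apply]
      rw [MvPowerSeries.coeff_mul]
      apply Finset.sum_eq_zero
      rintro pq hpq
      have hsum : pq.1 + pq.2 = emb p := Finset.HasAntidiagonal.mem_antidiagonal.mp hpq
      have hd : dE pq.1 + dE pq.2 = dE (emb p) := by rw [← dE_add, hsum]
      by_cases hc1 : MvPolynomial.coeff pq.1 (Cpoly c) = 0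
      · rw [MvPolynomial.coeff_coe, hc1, zero_mul]
      · have hd1 : dE pq.1 = k - 1 := hCcoeff c pq.1 hc1
        rw [hΨ pq.2 (by omega), mul_zero]
    have hκinj : Function.Injective κ := by
      intro c c' hcc
      have hz : κ (c - c') = 0 := by rw [map_sub, hcc, sub_self]
      rw [hκ_apply] at hz
      have h1 : truncPS s ((Cpoly (c - c') * g₁ : MP) : PS) = 0 := (Prod.ext_iff.mp hz).1
      have hzero : (Cpoly (c - c') * g₁ : MP) = 0 := by
        apply MvPolynomial.ext
        intro e
        by_cases he : dE e < s
        · obtain ⟨p, rfl⟩ := emb_surj e he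
          have := congrFun h1 p
          rw [truncPS_apply, MvPolynomial.coeff_coe] at this
          simpa using this
        · rw [MvPolynomial.coeff_zero]
          apply MvPolynomial.coeff_eq_zero_of_totalDegree_lt
          rw [dE_support]
          have := hdeg_cg (c - c')
          omega
      have hC0 : Cpoly (c - c') = 0 := by
        rcases mul_eq_zero.mp hzero with hc | hc
        · exact hc
        · exact absurd hc hg₁0
      have : c - c' = 0 := by
        funext i
        have := hCcoeff_exp (c - c') i
        rw [hC0, MvPolynomial.coeff_zero] at this
        exact (congrFun (rfl : (0 : Fin k → ℂ) = 0) i ▸ this.symm)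
      exact sub_eq_zero.mp this
    -- conclude the kernel bound
    have hcod : ∀ c, κ c ∈ LinearMap.ker θ := fun c => LinearMap.mem_ker.mpr (hκker c)
    have hinj2 : Function.Injective (LinearMap.codRestrict (LinearMap.ker θ) κ hcod) :=
      fun a b hab => hκinj (congrArg Subtype.val hab)
    have := LinearMap.finrank_le_finrank_of_injective hinj2
    simpa [Module.finrank_pi] using this
  -- dimension count
  have hDc : Module.finrank ℂ ((Idx s → ℂ) × (Idx (s+1) → ℂ))
      = Fintype.card (Idx s) + Fintype.card (Idx (s+1)) := by
    rw [Module.finrank_prod, Module.finrank_pi, Module.finrank_pi]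
  have hWc : Module.finrank ℂ (Idx (2*s+1) → ℂ) = Fintype.card (Idx (2*s+1)) :=
    Module.finrank_pi _
  have hrn := LinearMap.finrank_range_add_finrank_ker θ
  have hUle : Module.finrank ℂ U ≤ Module.finrank ℂ (LinearMap.range θ) :=
    Submodule.finrank_mono hUrange
  have hq := Submodule.finrank_quotient_add_finrank U
  have c1 := card_Idx (2*s+1)
  have c2 := card_Idx s
  have c3 := card_Idx (s+1)
  have key : Fintype.card (Idx (2*s+1))
      = Fintype.card (Idx s) + Fintype.card (Idx (s+1)) + (s+1)*s := by
    have hident : (2*s+1)*((2*s+1)+1) = s*(s+1) + (s+1)*((s+1)+1) + 2*((s+1)*s) := by ring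
    omega
  have hfr : (s+1)*s + k ≤ Module.finrank ℂ ((Idx (2*s+1) → ℂ) ⧸ U) := by
    rw [hDc] at hrn
    rw [hWc] at hq
    set t := (s+1)*s with ht
    omega
  -- transfer along the surjection to the power series quotient
  set φ : PS →ₗ[ℂ] ((Idx (2*s+1) → ℂ) ⧸ U) := U.mkQ ∘ₗ π with hφ
  have hπsurj : Function.Surjective π := by
    intro w
    refine ⟨ofFun (2*s+1) w, ?_⟩
    funext p
    rw [hπ, truncPS_apply, coeff_ofFun_emb]
  have hφsurj : Function.Surjective φ := by
    intro y
    obtain ⟨v, hv⟩ := Submodule.Quotient.mk_surjective U y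
    obtain ⟨x, hx⟩ := hπsurj v
    exact ⟨x, by rw [hφ]; simp [hx, hv]⟩
  have hle : I.restrictScalars ℂ ≤ LinearMap.ker φ := by
    intro x hx
    rw [LinearMap.mem_ker, hφ, LinearMap.comp_apply, Submodule.mkQ_apply,
      Submodule.Quotient.mk_eq_zero]
    exact Submodule.mem_map_of_mem hx
  set ψ : (PS ⧸ I.restrictScalars ℂ) →ₗ[ℂ] ((Idx (2*s+1) → ℂ) ⧸ U) :=
    Submodule.liftQ (I.restrictScalars ℂ) φ hle with hψ
  have hψsurj : Function.Surjective ψ := by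
    intro y
    obtain ⟨x, hx⟩ := hφsurj y
    exact ⟨Submodule.Quotient.mk x, hx⟩
  have hrank1 : Module.rank ℂ ((Idx (2*s+1) → ℂ) ⧸ U)
      ≤ Module.rank ℂ (PS ⧸ I.restrictScalars ℂ) :=
    LinearMap.rank_le_of_surjective ψ hψsurj
  have hrank2 : Module.rank ℂ (PS ⧸ I.restrictScalars ℂ) = Module.rank ℂ (PS ⧸ I) :=
    (Submodule.Quotient.restrictScalarsEquiv ℂ (I : Submodule PS PS)).rank_eq
  calc (((s+1) * ((s+1) - 1) + k : ℕ) : Cardinal)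
      = (((s+1)*s + k : ℕ) : Cardinal) := by norm_num
    _ ≤ ((Module.finrank ℂ ((Idx (2*s+1) → ℂ) ⧸ U) : ℕ) : Cardinal) := by
        exact_mod_cast hfr
    _ = Module.rank ℂ ((Idx (2*s+1) → ℂ) ⧸ U) := Module.finrank_eq_rank ℂ _
    _ ≤ Module.rank ℂ (PS ⧸ I.restrictScalars ℂ) := hrank1
    _ = Module.rank ℂ (PS ⧸ I) := hrank2
end
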